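/- arXiv:1708.06959 — 11 statements merged into one kernel-verified Lean document; each statement's English description precedes it below -/
import Mathlib

section
/- Let p be a prime, m ∈ {0,1}^p with m_0 = 0, and t_{k,j} the corresponding building blocks. Then for all k, i, j, l ∈ ℤ/pℤ, t_{k,i} - t_{k,j} = t_{k+l, i-l} - t_{k+l, j-l}, where the subscripts are computed in ℤ/pℤ. -/
/-- Entry `t_{0,j}` of the zeroth building block: `t_{0,j} = [j]_ℤ + m_j · p`. -/
def t0 (p : ℕ) (m : ZMod p → ℕ) (j : ZMod p) : ℤ := (j.val : ℤ) + (m j : ℤ) * p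

/-- Entry `t_{k,j}` of the `k`-th building block: `t_{k,j} = t_{0,j+k} - t_{0,k}`. -/
def tb (p : ℕ) (m : ZMod p → ℕ) (k j : ZMod p) : ℤ := t0 p m (j + k) - t0 p m k

/-- relative placement of entries:
`t_{k,i} - t_{k,j} = t_{k+l, i-l} - t_{k+l, j-l}` for all `k, i, j, l ∈ ℤ/pℤ`. -/
theorem stmt2 (p : ℕ) (hp : p.Prime) (m : ZMod p → ℕ)
    (hm : ∀ j, m j = 0 ∨ m j = 1) (hm0 : m 0 = 0) :
    ∀ k i j l : ZMod p,
      tb p m k i - tb p m k j = tb p m (k + l) (i - l) - tb p m (k + l) (j - l) := by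
  intro k i j l
  simp only [tb]
  have h1 : i - l + (k + l) = i + k := by ring
  have h2 : j - l + (k + l) = j + k := by ring
  rw [h1, h2]
  ring
end

section
/- Let p ≥ 3 be prime and m ∈ {0,1}^p with m_0 = 0, with building blocks t_{k,j} and σ = argmax_j t_{0,j}. The class is symmetric (i.e., {t_{0,j}: j} = {t_{0,σ} - t_{0,j}: j} as sets) if and only if: either m is the all-zero vector, or [σ]_ℤ is odd and m_i + m_{σ-i} = 1 for all i with [i]_ℤ ≤ [σ]_ℤ. -/
lemma val_sub_int (p : ℕ) [NeZero p] (a b : ZMod p) :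
    ((a - b).val : ℤ) = a.val - b.val + (if b.val ≤ a.val then 0 else p) := by
  have hdvd : (p : ℤ) ∣ ((a.val : ℤ) - b.val - (a - b).val) := by
    rw [← ZMod.intCast_zmod_eq_zero_iff_dvd]
    push_cast
    simp [ZMod.natCast_val, ZMod.cast_id]
  obtain ⟨k, hk⟩ := hdvd
  have ha : a.val < p := ZMod.val_lt a
  have hb : b.val < p := ZMod.val_lt b
  have hab : (a - b).val < p := ZMod.val_lt (a - b)
  have hp0 : 0 < (p : ℤ) := by exact_mod_cast Nat.pos_of_ne_zero (NeZero.ne p)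
  have hk1 : k ≤ 0 := by nlinarith
  have hk2 : -1 ≤ k := by nlinarith
  interval_cases k <;> split <;> omega

/-- Symmetry is equivalent to the pointwise identity. -/
lemma symm_iff_pointwise (p : ℕ) [NeZero p] (m : ZMod p → ℕ) (σ : ZMod p) :
    (Finset.image (t0 p m) Finset.univ =
        Finset.image (fun j => t0 p m σ - t0 p m j) Finset.univ) ↔
      (∀ i, t0 p m i + t0 p m (σ - i) = t0 p m σ) := by
  have hcast : ∀ k : ZMod p, ((t0 p m k : ℤ) : ZMod p) = k := by
    intro k
    unfold t0
    push_cast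
    simp [ZMod.natCast_val, ZMod.cast_id]
  constructor
  · intro h i
    have hmem : t0 p m σ - t0 p m i ∈ Finset.image (t0 p m) Finset.univ := by
      rw [h]
      exact Finset.mem_image.mpr ⟨i, Finset.mem_univ i, rfl⟩
    obtain ⟨k, _, hk⟩ := Finset.mem_image.mp hmem
    have : k = σ - i := by
      have := congrArg (fun z : ℤ => (z : ZMod p)) hk
      simpa [hcast, sub_eq_iff_eq_add] using this
    rw [this] at hk
    linarith [hk]
  · intro h
    ext x
    simp only [Finset.mem_image, Finset.mem_univ, true_and]
    constructor
    · rintro ⟨j, rfl⟩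
      exact ⟨σ - j, by have := h (σ - j); have h2 : σ - (σ - j) = j := by ring
                       rw [h2] at this; linarith⟩
    · rintro ⟨j, rfl⟩
      exact ⟨σ - j, by linarith [h j]⟩

/-- the class is symmetric (`set(t_0) = t_{0,σ} - set(t_0)`) iff either
`m = 0`, or `[σ]_ℤ` is odd and `m_i + m_{σ-i} = 1` for all `i` with `[i]_ℤ ≤ [σ]_ℤ`. -/
theorem stmt5 (p : ℕ) [NeZero p] (hp : p.Prime) (hp3 : 3 ≤ p) (m : ZMod p → ℕ)
    (hm : ∀ j, m j = 0 ∨ m j = 1) (hm0 : m 0 = 0)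
    (σ : ZMod p) (hσ : ∀ j, t0 p m j ≤ t0 p m σ) :
    (Finset.image (t0 p m) Finset.univ =
        Finset.image (fun j => t0 p m σ - t0 p m j) Finset.univ) ↔
      ((∀ j, m j = 0) ∨
        (Odd σ.val ∧ ∀ i : ZMod p, i.val ≤ σ.val → m i + m (σ - i) = 1)) := by
  rw [symm_iff_pointwise]
  have hp0 : 0 < (p : ℤ) := by exact_mod_cast Nat.pos_of_ne_zero (NeZero.ne p)
  have hvlt : ∀ a : ZMod p, a.val < p := fun a => ZMod.val_lt a
  -- m vanishes beyond σ
  have hmhigh : ∀ i : ZMod p, σ.val < i.val → m i = 0 := by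
    intro i hi
    rcases hm i with h0 | h1
    · exact h0
    · exfalso
      have := hσ i
      unfold t0 at this
      rcases hm σ with hs0 | hs1 <;> rw [h1] at this <;>
        [rw [hs0] at this; rw [hs1] at this] <;> push_cast at this <;> omega
  constructor
  · intro C
    by_cases hz : ∀ j, m j = 0
    · exact Or.inl hz
    · right
      push_neg at hz
      obtain ⟨j0, hj0⟩ := hz
      have hmj0 : m j0 = 1 := by rcases hm j0 with h | h; exact absurd h hj0; exact h
      have hmσ : m σ = 1 := by
        rcases hm σ with hs | hs
        · exfalso
          have := hσ j0
          unfold t0 at this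
          rw [hmj0, hs] at this
          have := hvlt σ
          push_cast at *
          omega
        · exact hs
      have key : ∀ i : ZMod p, i.val ≤ σ.val → m i + m (σ - i) = 1 := by
        intro i hi
        have hC := C i
        unfold t0 at hC
        have hv := val_sub_int p σ i
        rw [if_pos hi] at hv
        rw [hmσ] at hC
        simp only [Nat.cast_zero, add_zero] at hv
        have hp' : (p : ℤ) ≠ 0 := ne_of_gt hp0
        have : ((m i : ℤ) + m (σ - i)) * p = 1 * p := by push_cast at hC ⊢; linarith
        have := mul_right_cancel₀ hp' this
        exact_mod_cast by linarith [this]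
      refine ⟨?_, key⟩
      -- oddness
      by_contra hodd
      rw [Nat.odd_iff] at hodd
      set h := σ.val / 2 with hdef
      have hh : σ.val = h + h := by omega
      set i : ZMod p := (h : ZMod p) with hidef
      have hhlt : h < p := by have := hvlt σ; omega
      have hival : i.val = h := by rw [hidef, ZMod.val_natCast_of_lt hhlt]
      have hile : i.val ≤ σ.val := by omega
      have hσi : σ - i = i := by
        have : σ = i + i := by
          have : ((σ.val : ℕ) : ZMod p) = σ := ZMod.natCast_zmod_val σ
          rw [← this, hh]; push_cast; ring
        rw [this]; ring
      have := key i hile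
      rw [hσi] at this
      omega
  · rintro (hz | ⟨_, hcond⟩) <;> intro i
    · -- m ≡ 0 case
      have hσv : σ.val = p - 1 := by
        have h1 : (((p - 1 : ℕ) : ZMod p)).val = p - 1 := ZMod.val_natCast_of_lt (by omega)
        have := hσ ((p - 1 : ℕ) : ZMod p)
        unfold t0 at this
        rw [hz, hz, h1] at this
        have := hvlt σ
        push_cast at *
        omega
      unfold t0
      rw [hz, hz, hz]
      have hv := val_sub_int p σ i
      have hile : i.val ≤ σ.val := by have := hvlt i; omega
      rw [if_pos hile] at hv
      push_cast
      omega
    · -- odd case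
      have hmσ : m σ = 1 := by
        have := hcond 0 (by simp [ZMod.val_zero])
        simp only [sub_zero] at this
        omega
      unfold t0
      have hv := val_sub_int p σ i
      by_cases hi : i.val ≤ σ.val
      · rw [if_pos hi] at hv
        simp only [Nat.cast_zero, add_zero] at hv
        have hs : (m i : ℤ) + m (σ - i) = 1 := by exact_mod_cast hcond i hi
        have hmul : (m i : ℤ) * p + m (σ - i) * p = p := by
          rw [← add_mul, hs, one_mul]
        rw [hmσ]
        push_cast
        linarith [hv, hmul]
      · rw [if_neg hi] at hv
        push_neg at hi
        have hmi : m i = 0 := hmhigh i hi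
        have hmsi : m (σ - i) = 0 := by
          apply hmhigh
          have := hvlt i
          omega
        rw [hmσ, hmi, hmsi]
        simp only [Nat.cast_zero, Nat.cast_one, zero_mul, add_zero, one_mul]
        linarith [hv, hvlt i]
end

section
/- Let p ≥ 3 be prime, m ∈ {0,1}^p a class with m_0 = 0 and σ = argmax_j t_{0,j}. Then the class is symmetric if and only if t_{σ,j} = -t_{0,-j} for all j ∈ ℤ/pℤ. -/
lemma cast_t0 (p : ℕ) [NeZero p] (m : ZMod p → ℕ) (x : ZMod p) :
    ((t0 p m x : ℤ) : ZMod p) = x := by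
  simp [t0]

/-- the class is symmetric iff `t_{σ,j} = -t_{0,-j}` for all `j`. -/
theorem stmt6 (p : ℕ) [NeZero p] (hp : p.Prime) (hp3 : 3 ≤ p) (m : ZMod p → ℕ)
    (hm : ∀ j, m j = 0 ∨ m j = 1) (hm0 : m 0 = 0)
    (σ : ZMod p) (hσ : ∀ j, t0 p m j ≤ t0 p m σ) :
    (Finset.image (t0 p m) Finset.univ =
        Finset.image (fun j => t0 p m σ - t0 p m j) Finset.univ) ↔
      (∀ j : ZMod p, tb p m σ j = - t0 p m (-j)) := by
  constructor
  · intro h j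
    -- t0 (j+σ) is in the RHS image
    have hmem : t0 p m (j + σ) ∈ Finset.image (fun k => t0 p m σ - t0 p m k) Finset.univ := by
      rw [← h]
      exact Finset.mem_image_of_mem _ (Finset.mem_univ _)
    obtain ⟨k, -, hk⟩ := Finset.mem_image.mp hmem
    -- cast mod p to identify k
    have hc : ((t0 p m σ - t0 p m k : ℤ) : ZMod p) = ((t0 p m (j + σ) : ℤ) : ZMod p) := by
      rw [hk]
    rw [Int.cast_sub, cast_t0, cast_t0, cast_t0] at hc
    have hkval : k = -j := by linear_combination -hc
    rw [hkval] at hk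
    simp [tb]
    linarith [hk]
  · intro h
    have key : ∀ j : ZMod p, t0 p m (j + σ) = t0 p m σ - t0 p m (-j) := by
      intro j
      have := h j
      simp [tb] at this
      linarith
    ext x
    simp only [Finset.mem_image, Finset.mem_univ, true_and]
    constructor
    · rintro ⟨k, rfl⟩
      refine ⟨σ - k, ?_⟩
      have := key (k - σ)
      simp only [sub_add_cancel, neg_sub] at this
      linarith
    · rintro ⟨k, rfl⟩
      refine ⟨-k + σ, ?_⟩
      have := key (-k)
      rw [neg_neg] at this
      linarith
end

section
/- For a prime p ≥ 3, the number of symmetric basic building block classes (binary vectors m of length p with m_0 = 0 yielding a symmetric class) is exactly 2^{(p-1)/2}. -/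
/-!
The map `j ↦ t_{0,j}` is injective, since `t_{0,j} ≡ j (mod p)`, so the value set is symmetric
about `t_{0,σ}` exactly when `t_{0,j} + t_{0,σ-j} = t_{0,σ}` for all `j`. Reading this identity
together with the maximality of `t_{0,σ}` shows that either `m = 0`, or `m_σ = 1`, `m` vanishes
above `[σ]` and `m_j + m_{σ-j} = 1` for `[j] ≤ [σ]`; the midpoint `j = [σ]/2` then forces `[σ]`
to be odd. Writing `p = 2n + 1` and `[σ] = 2k + 1` with `k < n`, such an `m` is determined by
the free bits `m_1, …, m_k`, so there are `1 + ∑_{k<n} 2^k = 2^n` symmetric classes.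
-/

open Finset

lemma Fin.two_ne_iff_eq_one_sub {x y : Fin 2} : x ≠ y ↔ x = 1 - y := by
  revert x y; decide

namespace ZMod

lemma val_sub_of_lt {p : ℕ} [NeZero p] {a b : ZMod p} (h : a.val < b.val) :
    (a - b).val = a.val + p - b.val := by
  have hba : (b - a).val = b.val - a.val := ZMod.val_sub h.le
  have hne : b - a ≠ 0 := fun h0 => by rw [h0, ZMod.val_zero] at hba; omega
  rw [← neg_sub, ZMod.neg_val, if_neg hne, hba]
  have := ZMod.val_lt b
  omega

end ZMod

namespace SymmetricClass

section

variable {p : ℕ} {m : ZMod p → Fin 2} {σ : ZMod p}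

/-- The paper's condition `m_j + m_{σ-j} = 1` for `[j] ≤ [σ]`, together with the vanishing of `m`
above `[σ]`, which the paper gets for free from `σ = argmax t_0`. -/
def IsComplementaryAbout (m : ZMod p → Fin 2) (σ : ZMod p) : Prop :=
  (∀ j : ZMod p, σ.val < j.val → m j = 0) ∧ ∀ j : ZMod p, j.val ≤ σ.val → m (σ - j) ≠ m j

lemma IsComplementaryAbout.apply_self (h0 : m 0 = 0) (h : IsComplementaryAbout m σ) :
    m σ = 1 := by
  have := h.2 σ le_rfl
  rw [sub_self, h0] at this
  exact Fin.eq_one_of_ne_zero _ this.symm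

def prependZero {k : ℕ} (c : Fin k → Fin 2) : ℕ → Fin 2
  | 0 => 0
  | i + 1 => if h : i < k then c ⟨i, h⟩ else 0

lemma prependZero_restrict {k i : ℕ} (h0 : m 0 = 0) (hi : i ≤ k) :
    prependZero (fun l : Fin k => m ((l + 1 : ℕ) : ZMod p)) i = m i := by
  cases i with
  | zero => simpa [prependZero] using h0.symm
  | succ i => simp [prependZero, show i < k by omega]

end

variable {p : ℕ} [NeZero p]

lemma t0_cast (m : ZMod p → ℕ) (j : ZMod p) : ((t0 p m j : ℤ) : ZMod p) = j := by
  simp [t0]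

lemma image_t0_eq_image_sub_iff (m : ZMod p → ℕ) (σ : ZMod p) :
    image (t0 p m) univ = image (fun j => t0 p m σ - t0 p m j) univ ↔
      ∀ j, t0 p m j + t0 p m (σ - j) = t0 p m σ := by
  constructor
  · intro h j
    obtain ⟨k, -, hk⟩ := mem_image.mp (h ▸ mem_image_of_mem _ (mem_univ j) :
      t0 p m σ - t0 p m j ∈ image (t0 p m) univ)
    obtain rfl : k = σ - j := by
      simpa [t0_cast] using congrArg (Int.cast : ℤ → ZMod p) hk
    linarith
  · intro h
    have : (fun j => t0 p m σ - t0 p m j) = t0 p m ∘ (Equiv.subLeft σ) :=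
      funext fun j => (eq_sub_of_add_eq' (h j)).symm
    rw [this, ← image_image, image_univ_equiv]

def IsSymmetricClass (m : ZMod p → Fin 2) : Prop :=
  m 0 = 0 ∧ ∃ σ : ZMod p,
    (∀ j, t0 p (fun j => (m j : ℕ)) j ≤ t0 p (fun j => (m j : ℕ)) σ) ∧
    Finset.image (t0 p (fun j => (m j : ℕ))) Finset.univ =
      Finset.image (fun j => t0 p (fun j => (m j : ℕ)) σ - t0 p (fun j => (m j : ℕ)) j)
        Finset.univ

variable {m : ZMod p → Fin 2} {σ : ZMod p}

lemma t0_of_eq_zero {j : ZMod p} (h : m j = 0) : t0 p (fun j => (m j : ℕ)) j = j.val := by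
  simp [t0, h]

lemma t0_of_eq_one {j : ZMod p} (h : m j = 1) : t0 p (fun j => (m j : ℕ)) j = j.val + p := by
  simp [t0, h]

lemma eq_zero_or_isComplementaryAbout
    (hmax : ∀ j, t0 p (fun j => (m j : ℕ)) j ≤ t0 p (fun j => (m j : ℕ)) σ)
    (hsum : ∀ j, t0 p (fun j => (m j : ℕ)) j + t0 p (fun j => (m j : ℕ)) (σ - j) =
      t0 p (fun j => (m j : ℕ)) σ) :
    m = 0 ∨ IsComplementaryAbout m σ := by
  have hσp := ZMod.val_lt σ
  rcases Fin.exists_fin_two.mp ⟨m σ, rfl⟩ with hσ | hσ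
  · left
    funext j
    by_contra hj
    have := hmax j
    rw [t0_of_eq_one (Fin.eq_one_of_ne_zero _ hj), t0_of_eq_zero hσ] at this
    omega
  · right
    refine ⟨fun j hj => ?_, fun j hj => ?_⟩
    · by_contra h
      have := hmax j
      rw [t0_of_eq_one (Fin.eq_one_of_ne_zero _ h), t0_of_eq_one hσ] at this
      omega
    · have := hsum j
      rw [t0_of_eq_one hσ] at this
      have hval := ZMod.val_sub hj
      rcases Fin.exists_fin_two.mp ⟨m j, rfl⟩ with h | h <;>
        rcases Fin.exists_fin_two.mp ⟨m (σ - j), rfl⟩ with h' | h' <;>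
        simp only [t0_of_eq_zero, t0_of_eq_one, h, h'] at this ⊢ <;> omega

lemma IsComplementaryAbout.isSymmetricClass (h0 : m 0 = 0) (h : IsComplementaryAbout m σ) :
    IsSymmetricClass m := by
  have hσ := t0_of_eq_one (h.apply_self h0)
  refine ⟨h0, σ, fun j => ?_, (image_t0_eq_image_sub_iff _ σ).mpr fun j => ?_⟩
  · have := ZMod.val_lt j
    rcases Fin.exists_fin_two.mp ⟨m j, rfl⟩ with hj | hj
    · rw [hσ, t0_of_eq_zero hj]
      omega
    · have : j.val ≤ σ.val := by
        by_contra hlt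
        exact absurd (h.1 j (not_le.mp hlt)) (by rw [hj]; decide)
      rw [hσ, t0_of_eq_one hj]
      omega
  · rw [hσ]
    by_cases hj : j.val ≤ σ.val
    · have hval := ZMod.val_sub hj
      have hne := h.2 j hj
      rcases Fin.exists_fin_two.mp ⟨m j, rfl⟩ with h₁ | h₁ <;>
        rcases Fin.exists_fin_two.mp ⟨m (σ - j), rfl⟩ with h₂ | h₂ <;>
        simp only [t0_of_eq_zero, t0_of_eq_one, h₁, h₂, ne_eq, not_true_eq_false] at hne ⊢ <;>
        omega
    · have hval := ZMod.val_sub_of_lt (not_le.mp hj)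
      have := ZMod.val_lt j
      rw [t0_of_eq_zero (h.1 j (by omega)), t0_of_eq_zero (h.1 (σ - j) (by omega))]
      omega

lemma isSymmetricClass_zero : IsSymmetricClass (0 : ZMod p → Fin 2) := by
  have hσ : ((p - 1 : ℕ) : ZMod p).val = p - 1 :=
    ZMod.val_natCast_of_lt (Nat.sub_lt (NeZero.pos p) one_pos)
  refine ⟨rfl, (p - 1 : ℕ), fun j => ?_, (image_t0_eq_image_sub_iff _ _).mpr fun j => ?_⟩
  all_goals have := ZMod.val_lt j
  · simp only [t0, hσ, Pi.zero_apply, Fin.val_zero]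
    omega
  · simp only [t0, Pi.zero_apply, Fin.val_zero]
    rw [ZMod.val_sub (by omega), hσ]
    omega

theorem isSymmetricClass_iff :
    IsSymmetricClass m ↔ m = 0 ∨ m 0 = 0 ∧ ∃ σ, IsComplementaryAbout m σ := by
  constructor
  · rintro ⟨h0, σ, hmax, himage⟩
    exact (eq_zero_or_isComplementaryAbout hmax
      ((image_t0_eq_image_sub_iff _ σ).mp himage)).imp_right fun h => ⟨h0, σ, h⟩
  · rintro (rfl | ⟨h0, σ, h⟩)
    exacts [isSymmetricClass_zero, h.isSymmetricClass h0]

lemma IsComplementaryAbout.odd_val (h : IsComplementaryAbout m σ) : Odd σ.val := by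
  by_contra hev
  obtain ⟨r, hr⟩ := Nat.not_odd_iff_even.mp hev
  have hrval : ((r : ℕ) : ZMod p).val = r :=
    ZMod.val_natCast_of_lt (by have := ZMod.val_lt σ; omega)
  apply h.2 r (by omega)
  congr 1
  apply ZMod.val_injective
  rw [ZMod.val_sub (by omega), hrval]
  omega

lemma IsComplementaryAbout.unique {τ : ZMod p} (h0 : m 0 = 0) (hσ : IsComplementaryAbout m σ)
    (hτ : IsComplementaryAbout m τ) : σ = τ := by
  apply ZMod.val_injective
  by_contra hne
  rcases Nat.lt_or_gt_of_ne hne with hlt | hlt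
  · exact one_ne_zero ((hτ.apply_self h0).symm.trans (hσ.1 τ hlt))
  · exact one_ne_zero ((hσ.apply_self h0).symm.trans (hτ.1 σ hlt))

instance : DecidablePred (IsComplementaryAbout m) := fun σ => by
  unfold IsComplementaryAbout; infer_instance

/-- Indexed by `k` rather than by the (necessarily odd) centre `σ = 2k + 1`. -/
def complementaryAbout (p : ℕ) [NeZero p] (k : ℕ) : Finset (ZMod p → Fin 2) :=
  {m | m 0 = 0 ∧ IsComplementaryAbout m ((2 * k + 1 : ℕ) : ZMod p)}

def reflect (k : ℕ) (c : ℕ → Fin 2) : ZMod p → Fin 2 := fun j =>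
  if j.val ≤ k then c j.val else if j.val ≤ 2 * k + 1 then 1 - c (2 * k + 1 - j.val) else 0

lemma reflect_isComplementaryAbout {k : ℕ} (hk : 2 * k + 1 < p) (c : ℕ → Fin 2) :
    IsComplementaryAbout (reflect k c) ((2 * k + 1 : ℕ) : ZMod p) := by
  rw [IsComplementaryAbout, ZMod.val_natCast_of_lt hk]
  refine ⟨fun j hj => by simp [reflect, show ¬ j.val ≤ k by omega, hj.not_ge], fun j hj => ?_⟩
  have hval : ((2 * k + 1 : ℕ) - j : ZMod p).val = 2 * k + 1 - j.val := by
    rw [ZMod.val_sub (by rwa [ZMod.val_natCast_of_lt hk]), ZMod.val_natCast_of_lt hk]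
  simp only [reflect, hval, hj, if_true]
  by_cases hjk : j.val ≤ k
  · rw [if_neg (by omega), if_pos (by omega), Nat.sub_sub_self hj, if_pos hjk]
    generalize c j.val = x; revert x; decide
  · rw [if_pos (by omega), if_neg hjk]
    generalize c _ = x; revert x; decide

lemma reflect_restrict {k : ℕ} (hk : 2 * k + 1 < p) (hm : m ∈ complementaryAbout p k) :
    reflect k (prependZero fun l : Fin k => m ((l + 1 : ℕ) : ZMod p)) = m := by
  obtain ⟨h0, hvanish, hcompl⟩ := (mem_filter.mp hm).2
  rw [ZMod.val_natCast_of_lt hk] at hvanish hcompl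
  funext j
  simp only [reflect]
  split_ifs with h₁ h₂
  · rw [prependZero_restrict h0 h₁, ZMod.natCast_zmod_val]
  · have hj : (((2 * k + 1 - j.val : ℕ)) : ZMod p) = ((2 * k + 1 : ℕ) : ZMod p) - j := by
      rw [Nat.cast_sub (by omega), ZMod.natCast_zmod_val]
    rw [prependZero_restrict h0 (by omega), hj, eq_comm, ← Fin.two_ne_iff_eq_one_sub]
    exact (hcompl j h₂).symm
  · exact (hvanish j (by omega)).symm

lemma card_complementaryAbout {k : ℕ} (hk : 2 * k + 1 < p) :
    #(complementaryAbout p k) = 2 ^ k := by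
  refine (card_nbij' (fun m (l : Fin k) => m ((l + 1 : ℕ) : ZMod p))
    (fun c => reflect k (prependZero c)) (fun _ _ => mem_univ _) (fun c _ => ?_)
    (fun m hm => reflect_restrict hk hm) (fun c _ => ?_)).trans (by simp)
  · exact mem_filter.mpr
      ⟨mem_univ _, by simp [reflect, prependZero], reflect_isComplementaryAbout hk _⟩
  · funext l
    have hl : ((l + 1 : ℕ) : ZMod p).val = l + 1 := ZMod.val_natCast_of_lt (by omega)
    simp only [reflect, hl, if_pos (show (l : ℕ) + 1 ≤ k from l.isLt), prependZero, dif_pos l.isLt]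

lemma isSymmetricClass_iff_mem {n : ℕ} (hpn : p = 2 * n + 1) :
    IsSymmetricClass m ↔ m ∈ insert 0 ((range n).biUnion (complementaryAbout p)) := by
  simp only [isSymmetricClass_iff, mem_insert, mem_biUnion, mem_range, complementaryAbout,
    mem_filter, mem_univ, true_and]
  refine or_congr_right ⟨fun ⟨h0, σ, h⟩ => ?_, fun ⟨k, _, h0, h⟩ => ⟨h0, _, h⟩⟩
  obtain ⟨k, hk⟩ := h.odd_val
  have := ZMod.val_lt σ
  refine ⟨k, by omega, h0, ?_⟩
  rwa [← hk, ZMod.natCast_zmod_val]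

lemma card_symmetricClasses {n : ℕ} (hpn : p = 2 * n + 1) :
    #(insert 0 ((range n).biUnion (complementaryAbout p))) = 2 ^ n := by
  have hzero : (0 : ZMod p → Fin 2) ∉ (range n).biUnion (complementaryAbout p) := by
    simp only [mem_biUnion, complementaryAbout, mem_filter]
    rintro ⟨k, -, -, h0, h⟩
    exact zero_ne_one (h.apply_self h0)
  have hdisj : (range n : Set ℕ).PairwiseDisjoint (complementaryAbout p) := by
    intro k hk l hl hkl
    refine disjoint_left.mpr fun m hmk hml => hkl ?_
    simp only [complementaryAbout, mem_filter] at hmk hml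
    have := congrArg ZMod.val (hmk.2.2.unique hmk.2.1 hml.2.2)
    simp only [coe_range, Set.mem_Iio] at hk hl
    rw [ZMod.val_natCast_of_lt (by omega), ZMod.val_natCast_of_lt (by omega)] at this
    omega
  rw [card_insert_of_notMem hzero, card_biUnion hdisj,
    sum_congr rfl fun k hk => card_complementaryAbout (by simp at hk; omega)]
  simpa [one_add_one_eq_two] using geom_sum_mul_add (1 : ℕ) n

end SymmetricClass

/-- for a prime `p ≥ 3`, there are exactly `2^((p-1)/2)` binary vectors
`m` of length `p` with `m 0 = 0` whose building block class is symmetric. -/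
theorem stmt7 (p : ℕ) [NeZero p] (hp : p.Prime) (hp3 : 3 ≤ p) :
    ({m : ZMod p → Fin 2 | m 0 = 0 ∧
        ∃ σ : ZMod p,
          (∀ j, t0 p (fun j => (m j : ℕ)) j ≤ t0 p (fun j => (m j : ℕ)) σ) ∧
          Finset.image (t0 p (fun j => (m j : ℕ))) Finset.univ =
            Finset.image (fun j => t0 p (fun j => (m j : ℕ)) σ -
              t0 p (fun j => (m j : ℕ)) j) Finset.univ}).ncard
      = 2 ^ ((p - 1) / 2) := by
  obtain ⟨n, hpn⟩ := hp.odd_of_ne_two (by omega)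
  have hS : {m : ZMod p → Fin 2 | SymmetricClass.IsSymmetricClass m} =
      ↑(insert 0 ((range n).biUnion (SymmetricClass.complementaryAbout p))) :=
    Set.ext fun m => SymmetricClass.isSymmetricClass_iff_mem hpn
  rw [show (p - 1) / 2 = n by omega, ← SymmetricClass.card_symmetricClasses hpn,
    ← Set.ncard_coe_finset, ← hS]
  rfl
end

section
/- Let q ≥ 3 be a prime power, n ≥ 1, and c, c^0, c^1, ..., c^k ∈ 𝔽_q^n. The following are equivalent: (1) the constant-weight embeddings F_v(c^0),...,F_v(c^k) ∈ ℝ^{nq} are affinely independent; (2) F_v(c+c^0),...,F_v(c+c^k) are affinely independent; (3) the Flanagan embeddings F'_v(c^1 - c^0),...,F'_v(c^k - c^0) ∈ ℝ^{n(q-1)} are linearly independent. -/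
/-- Constant-weight embedding `F_v`. -/
noncomputable def cwEmb (F : Type*) [DecidableEq F] (n : ℕ) (c : Fin n → F) :
    Fin n → F → ℝ :=
  fun i δ => if δ = c i then 1 else 0

/-- Flanagan's embedding `F'_v`. -/
noncomputable def flEmb (F : Type*) [Zero F] [DecidableEq F] (n : ℕ) (c : Fin n → F) :
    Fin n → {δ : F // δ ≠ 0} → ℝ :=
  fun i δ => if (δ : F) = c i then 1 else 0

noncomputable def transEquiv (F : Type*) [AddGroup F] (n : ℕ) (c : Fin n → F) :
    (Fin n → F → ℝ) ≃ₗ[ℝ] (Fin n → F → ℝ) :=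
  LinearEquiv.piCongrRight fun i => LinearEquiv.funCongrLeft ℝ ℝ (Equiv.addRight (c i))

lemma transEquiv_cwEmb (F : Type*) [AddGroup F] [DecidableEq F] (n : ℕ)
    (c d : Fin n → F) :
    transEquiv F n c (cwEmb F n d) = cwEmb F n (fun i => d i - c i) := by
  funext i δ
  simp only [transEquiv, LinearEquiv.piCongrRight, LinearEquiv.funCongrLeft, cwEmb]
  simp [LinearMap.funLeft, cwEmb, eq_sub_iff_add_eq]

noncomputable def tMap (F : Type*) [Zero F] [DecidableEq F] [Fintype F] (n : ℕ) :
    (Fin n → {δ : F // δ ≠ 0} → ℝ) →ₗ[ℝ] (Fin n → F → ℝ) where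
  toFun f := fun i δ => if h : δ = 0 then -∑ ζ : {δ : F // δ ≠ 0}, f i ζ else f i ⟨δ, h⟩
  map_add' f g := by
    funext i δ
    by_cases h : δ = 0 <;> simp [h, Finset.sum_add_distrib] <;> ring
  map_smul' r f := by
    funext i δ
    by_cases h : δ = 0 <;> simp [h, Finset.mul_sum]

lemma tMap_inj (F : Type*) [Zero F] [DecidableEq F] [Fintype F] (n : ℕ) :
    LinearMap.ker (tMap F n) = ⊥ := by
  rw [LinearMap.ker_eq_bot]
  intro f g h
  funext i ζ
  have := congrFun (congrFun h i) (ζ : F)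
  simpa [tMap, ζ.2] using this

lemma tMap_flEmb (F : Type*) [Zero F] [DecidableEq F] [Fintype F] (n : ℕ) (d : Fin n → F) :
    tMap F n (flEmb F n d) = cwEmb F n d - cwEmb F n 0 := by
  funext i δ
  simp only [tMap, flEmb, cwEmb, LinearMap.coe_mk, AddHom.coe_mk, Pi.sub_apply]
  by_cases h : δ = 0
  · simp only [h, dif_pos]
    by_cases hd : d i = 0
    · rw [Finset.sum_eq_zero (fun b _ => ?_)] <;> simp [hd]
      exact b.2
    · rw [Finset.sum_eq_single ⟨d i, hd⟩]
      · simp [hd, eq_comm]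
      · intro b _ hb
        simp only [ite_eq_right_iff]
        intro hbv; exact absurd (Subtype.ext hbv) hb
      · simp
  · simp [h, Pi.zero_apply]

lemma key (F : Type*) [Field F] [Fintype F] [DecidableEq F] (n k : ℕ)
    (cs : Fin (k + 1) → Fin n → F) :
    AffineIndependent ℝ (fun s => cwEmb F n (cs s)) ↔
      LinearIndependent ℝ (fun s : Fin k =>
        flEmb F n (fun i => cs s.succ i - cs 0 i)) := by
  rw [affineIndependent_iff_linearIndependent_vsub ℝ _ 0,
    ← linearIndependent_equiv (finSuccAboveEquiv (0 : Fin (k + 1)))]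
  have h1 : (fun (i : {x : Fin (k + 1) // x ≠ 0}) =>
        cwEmb F n (cs i) -ᵥ cwEmb F n (cs 0)) ∘ (finSuccAboveEquiv (0 : Fin (k + 1)))
      = fun s : Fin k => cwEmb F n (cs s.succ) - cwEmb F n (cs 0) := by
    funext s
    simp [finSuccAboveEquiv_apply, Fin.zero_succAbove, vsub_eq_sub]
  rw [h1, ← (tMap F n).linearIndependent_iff (tMap_inj F n),
    ← (transEquiv F n (cs 0)).toLinearMap.linearIndependent_iff (LinearEquiv.ker _)]
  have h2 : (transEquiv F n (cs 0)).toLinearMap ∘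
        (fun s : Fin k => cwEmb F n (cs s.succ) - cwEmb F n (cs 0))
      = (tMap F n) ∘ (fun s : Fin k => flEmb F n (fun i => cs s.succ i - cs 0 i)) := by
    funext s
    have h0 : (fun i => cs 0 i - cs 0 i) = (0 : Fin n → F) := by funext i; simp
    simp [map_sub, transEquiv_cwEmb, tMap_flEmb, h0]
    rfl
  rw [h2]

/-- equivalence of (1) affine independence of the constant-weight
embeddings of `c^0, …, c^k`, (2) affine independence of the embeddings of the
translates `c + c^s`, and (3) linear independence of the Flanagan embeddings of
the differences `c^s - c^0` (`s = 1, …, k`). -/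
theorem stmt9 (F : Type*) [Field F] [Fintype F] [DecidableEq F]
    (hq : 3 ≤ Fintype.card F) (n : ℕ) (hn : 1 ≤ n) (k : ℕ)
    (c : Fin n → F) (cs : Fin (k + 1) → Fin n → F) :
    (AffineIndependent ℝ (fun s => cwEmb F n (cs s)) ↔
      AffineIndependent ℝ (fun s => cwEmb F n (fun i => c i + cs s i))) ∧
    (AffineIndependent ℝ (fun s => cwEmb F n (cs s)) ↔
      LinearIndependent ℝ (fun s : Fin k =>
        flEmb F n (fun i => cs s.succ i - cs 0 i))) := by
  constructor
  · rw [← (transEquiv F n (-c)).toAffineEquiv.affineIndependent_iff]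
    have h3 : (transEquiv F n (-c)).toAffineEquiv ∘ (fun s => cwEmb F n (cs s))
        = fun s => cwEmb F n (fun i => c i + cs s i) := by
      funext s
      show transEquiv F n (-c) (cwEmb F n (cs s)) = _
      rw [transEquiv_cwEmb]
      congr 1; funext i; simp [add_comm]
    rw [h3]
  · exact key F n k cs
end

section
/- Let p be a prime, m ∈ {0,1}^p with m_0=0 defining a basic building block class with blocks t_k (k ∈ ℤ/pℤ) and σ = argmax_j t_{0,j}, and let C be the all-ones SPC code of length d over 𝔽_p. Let θ = (t_{k_1} | ... | t_{k_d}) be a vector of building blocks with canonical codeword c given by c_i = σ - k_i for i < d and c_d = -k_d, and κ = Σ_i t_{k_i, c_i}. Then for every ξ ∈ 𝔽_p^d: θ·F_v(c + ξ) - κ = Σ_{i=1}^{d-1} t_{σ, ξ_i} + t_{0, ξ_d}. In particular this quantity depends only on ξ, not on the choice of k_1,...,k_{d-1}. -/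
/-- with canonical codeword `c_i = σ - k_i` for `i < d` and
`c_d = -k_d`, and `κ = Σ_i t_{k_i, c_i}`, we have for all `ξ`:
`θ·F_v(c+ξ) - κ = Σ_{i<d-1} t_{σ,ξ_i} + t_{0,ξ_d}`, independent of the `k_i`. -/
theorem stmt14 (p : ℕ) [Fact p.Prime] (m : ZMod p → ℕ)
    (hm : ∀ j, m j = 0 ∨ m j = 1) (hm0 : m 0 = 0)
    (σ : ZMod p) (hσ : ∀ j, t0 p m j ≤ t0 p m σ)
    (d : ℕ) (hd : 1 ≤ d) (k : Fin d → ZMod p)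
    (c : Fin d → ZMod p)
    (hc : ∀ i : Fin d, c i = if (i : ℕ) < d - 1 then σ - k i else - k i)
    (κ : ℤ) (hκ : κ = ∑ i, tb p m (k i) (c i)) :
    ∀ ξ : Fin d → ZMod p,
      (∑ i, tb p m (k i) (c i + ξ i)) - κ =
        ∑ i : Fin d,
          (if (i : ℕ) < d - 1 then tb p m σ (ξ i) else t0 p m (ξ i)) := by
  intro ξ
  subst hκ
  rw [← Finset.sum_sub_distrib]
  apply Finset.sum_congr rfl
  intro i _
  rw [hc i]
  have h0 : t0 p m 0 = 0 := by simp [t0, hm0]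
  split
  · have h1 : σ - k i + ξ i + k i = ξ i + σ := by ring
    have h2 : σ - k i + k i = σ := by ring
    simp [tb, h1, h2]
  · have h1 : -k i + ξ i + k i = ξ i := by ring
    have h2 : -k i + k i = 0 := by ring
    simp [tb, h1, h2, h0]
end

section
/- Let p be prime, m ∈ {0,1}^p, m_0=0, a basic building block class with σ = argmax_j t_{0,j}, and d ≥ 1. A constraint θ = (t_{k_1}|...|t_{k_d}), κ ∈ ℝ arises from the Hi-Lo construction (i.e., the canonical codeword c satisfies c_i = σ - k_i for i < d, c_d = -k_d, Σc_i = 0, and κ = Σ_i t_{k_i,c_i}) if and only if Σ_{i=1}^d k_i = (d-1)·σ in ℤ/pℤ and κ = (d-1)·t_{0,σ} - Σ_{i=1}^d t_{0,k_i}. -/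
/-- `(θ, κ)` arises from the Hi-Lo construction (there is a canonical
codeword `c` with `c_i = σ - k_i` for `i < d`, `c_d = -k_d`, `Σ c_i = 0`, and
`κ = Σ t_{k_i,c_i}`) iff `Σ k_i = (d-1)σ` in `ℤ/pℤ` and
`κ = (d-1)·t_{0,σ} - Σ t_{0,k_i}`. -/
theorem stmt15 (p : ℕ) [Fact p.Prime] (m : ZMod p → ℕ)
    (hm : ∀ j, m j = 0 ∨ m j = 1) (hm0 : m 0 = 0)
    (σ : ZMod p) (hσ : ∀ j, t0 p m j ≤ t0 p m σ)
    (d : ℕ) (hd : 1 ≤ d) (k : Fin d → ZMod p) (κ : ℤ) :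
    (∃ c : Fin d → ZMod p,
        (∀ i : Fin d, (i : ℕ) < d - 1 → c i = σ - k i) ∧
        (∀ i : Fin d, (i : ℕ) = d - 1 → c i = - k i) ∧
        (∑ i, c i) = 0 ∧
        κ = ∑ i, tb p m (k i) (c i)) ↔
      ((∑ i, k i) = ((d - 1 : ℕ) : ZMod p) * σ ∧
        κ = ((d : ℤ) - 1) * t0 p m σ - ∑ i, t0 p m (k i)) := by
  have ht00 : t0 p m 0 = 0 := by simp [t0, hm0]
  obtain ⟨n, rfl⟩ : ∃ n, d = n + 1 := ⟨d - 1, (Nat.succ_pred_eq_of_pos hd).symm⟩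
  have key : ∀ c : Fin (n + 1) → ZMod p,
      (∀ i : Fin (n + 1), (i : ℕ) < n + 1 - 1 → c i = σ - k i) →
      (∀ i : Fin (n + 1), (i : ℕ) = n + 1 - 1 → c i = - k i) →
      ((∑ i, c i) = ((n : ZMod p)) * σ - ∑ i, k i ∧
       (∑ i, tb p m (k i) (c i)) = ((n + 1 : ℤ) - 1) * t0 p m σ - ∑ i, t0 p m (k i)) := by
    intro c h1 h2
    have hc1 : ∀ i : Fin n, c i.castSucc = σ - k i.castSucc := fun i =>
      h1 i.castSucc (by simpa using i.isLt)
    have hc2 : c (Fin.last n) = - k (Fin.last n) := h2 _ (by simp)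
    constructor
    · rw [Fin.sum_univ_castSucc, Fin.sum_univ_castSucc (f := fun i => k i)]
      simp only [hc1, hc2]
      rw [Finset.sum_sub_distrib, Finset.sum_const, Finset.card_univ, Fintype.card_fin,
        nsmul_eq_mul]
      ring
    · rw [Fin.sum_univ_castSucc, Fin.sum_univ_castSucc (f := fun i => t0 p m (k i))]
      simp only [hc1, hc2, tb, sub_add_cancel, neg_add_cancel, ht00]
      rw [Finset.sum_sub_distrib, Finset.sum_const, Finset.card_univ, Fintype.card_fin,
        nsmul_eq_mul]
      push_cast
      ring
  constructor
  · rintro ⟨c, h1, h2, hsum, rfl⟩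
    obtain ⟨e1, e2⟩ := key c h1 h2
    refine ⟨?_, e2⟩
    rw [e1] at hsum
    have : ((n + 1 - 1 : ℕ) : ZMod p) = (n : ZMod p) := by norm_num
    rw [this]
    linear_combination -hsum
  · rintro ⟨hk, rfl⟩
    refine ⟨fun i => if (i : ℕ) = n then -k i else σ - k i, fun i hi => if_neg (by omega),
      fun i hi => if_pos (by omega), ?_, ?_⟩
    · obtain ⟨e1, e2⟩ := key (fun i => if (i : ℕ) = n then -k i else σ - k i)
        (fun i hi => if_neg (by omega)) (fun i hi => if_pos (by omega))
      rw [e1, hk]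
      have : ((n + 1 - 1 : ℕ) : ZMod p) = (n : ZMod p) := by norm_num
      rw [this]
      ring
    · obtain ⟨e1, e2⟩ := key (fun i => if (i : ℕ) = n then -k i else σ - k i)
        (fun i hi => if_neg (by omega)) (fun i hi => if_pos (by omega))
      rw [e2]
      push_cast
      ring
end

section
/- Let p be prime and m ∈ {0,1}^p of the form (0,1,0,1,...,0,1,0,...,0), i.e., s ≥ 0 consecutive copies of (0,1) followed by zeros, with 0 ≤ s ≤ ⌈(p-1)/2⌉. Then the corresponding basic building block class is valid, meaning: for every codeword c of the all-ones SPC code of length d over 𝔽_p (any d ≥ 1), Σ_{i=1}^{d-1} t_{σ,c_i} + t_{0,c_d} ≤ 0, where σ = argmax_j t_{0,j}. -/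
lemma t0_cast (p : ℕ) [NeZero p] (m : ZMod p → ℕ) (j : ZMod p) :
    ((t0 p m j : ℤ) : ZMod p) = j := by
  unfold t0
  push_cast [ZMod.natCast_val, ZMod.cast_id, ZMod.natCast_self]
  ring

lemma tb_cast (p : ℕ) [NeZero p] (m : ZMod p → ℕ) (σ j : ZMod p) :
    ((tb p m σ j : ℤ) : ZMod p) = j := by
  unfold tb
  push_cast [t0_cast]
  ring

/-- The maximizer `σ` has `σ.val = 2s-1` and `m σ = 1` (when `1 ≤ s`, `2s ≤ p`). -/
lemma sigma_spec (p s : ℕ) [NeZero p] (hs1 : 1 ≤ s) (h2s : 2 * s ≤ p)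
    (m : ZMod p → ℕ)
    (hm : ∀ j : ZMod p, m j = if j.val < 2 * s ∧ j.val % 2 = 1 then 1 else 0)
    (σ : ZMod p) (hσ : ∀ j, t0 p m j ≤ t0 p m σ) :
    σ.val = 2 * s - 1 ∧ m σ = 1 := by
  set a : ZMod p := ((2 * s - 1 : ℕ) : ZMod p) with ha
  have hav : a.val = 2 * s - 1 := ZMod.val_natCast_of_lt (by omega)
  have hma : m a = 1 := by rw [hm, hav, if_pos (by omega)]
  have h0 : t0 p m a = ((2 * s - 1 : ℕ) : ℤ) + p := by
    unfold t0; rw [hav, hma]; push_cast; ring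
  have hle := hσ a
  rw [h0] at hle
  have hvσ : σ.val < p := ZMod.val_lt σ
  have hmσ := hm σ
  by_cases hc : σ.val < 2 * s ∧ σ.val % 2 = 1
  · rw [if_pos hc] at hmσ
    have ht : t0 p m σ = (σ.val : ℤ) + p := by unfold t0; rw [hmσ]; push_cast; ring
    rw [ht] at hle
    constructor
    · omega
    · exact hmσ
  · rw [if_neg hc] at hmσ
    have ht : t0 p m σ = (σ.val : ℤ) := by unfold t0; rw [hmσ]; push_cast; ring
    rw [ht] at hle
    omega

/-- Key dichotomy: every entry of the `σ`-th building block is even or `≤ -2s`. -/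
lemma key_s16 (p s : ℕ) (hp : p.Prime) (hs1 : 1 ≤ s) (h2s : 2 * s ≤ p)
    (m : ZMod p → ℕ)
    (hm : ∀ j : ZMod p, m j = if j.val < 2 * s ∧ j.val % 2 = 1 then 1 else 0)
    (σ : ZMod p) (hσ : ∀ j, t0 p m j ≤ t0 p m σ) (j : ZMod p) :
    (2 : ℤ) ∣ tb p m σ j ∨ tb p m σ j ≤ -(2 * s : ℤ) := by
  haveI : NeZero p := ⟨hp.pos.ne'⟩
  obtain ⟨hσv, hmσ⟩ := sigma_spec p s hs1 h2s m hm σ hσ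
  have htσ : t0 p m σ = ((2 * s - 1 : ℕ) : ℤ) + p := by
    unfold t0; rw [hσv, hmσ]; push_cast; ring
  have hvp : j.val < p := ZMod.val_lt j
  have hw : (j + σ).val = (j.val + (2 * s - 1)) % p := by
    rw [ZMod.val_add, hσv]
  have hwp : (j + σ).val < p := ZMod.val_lt (j + σ)
  have htb : tb p m σ j
      = ((j + σ).val : ℤ) + (m (j + σ) : ℤ) * p - (((2 * s - 1 : ℕ) : ℤ) + p) := by
    unfold tb t0; rw [hσv, hmσ]; push_cast; ring
  have hmw := hm (j + σ)
  rcases hp.eq_two_or_odd' with hp2 | hpodd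
  · -- p = 2, hence s = 1
    subst hp2
    have hs' : s = 1 := by omega
    subst hs'
    rcases (by omega : j.val = 0 ∨ j.val = 1) with h | h
    · left
      rw [htb]
      rw [if_pos (by omega : (j + σ).val < 2 * 1 ∧ (j + σ).val % 2 = 1)] at hmw
      have : (j + σ).val = 1 := by omega
      rw [this, hmw]
      decide
    · right
      rw [if_neg (by omega : ¬((j + σ).val < 2 * 1 ∧ (j + σ).val % 2 = 1))] at hmw
      rw [htb]
      have h0 : (j + σ).val = 0 := by omega
      rw [h0, hmw]
      decide
  · -- p odd
    have hpo : p % 2 = 1 := Nat.odd_iff.mp hpodd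
    rw [htb]
    rcases lt_or_ge (j.val + (2 * s - 1)) p with hlt | hge
    · have hww : (j + σ).val = j.val + (2 * s - 1) := by
        rw [hw, Nat.mod_eq_of_lt hlt]
      by_cases hc : (j + σ).val < 2 * s ∧ (j + σ).val % 2 = 1
      · rw [if_pos hc] at hmw
        rw [hmw]
        omega
      · rw [if_neg hc] at hmw
        rw [hmw]
        push_neg at hc
        omega
    · have hww : (j + σ).val = j.val + (2 * s - 1) - p := by
        rw [hw, Nat.mod_eq_sub_mod hge, Nat.mod_eq_of_lt (by omega)]
      by_cases hc : (j + σ).val < 2 * s ∧ (j + σ).val % 2 = 1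
      · rw [if_pos hc] at hmw
        rw [hmw]
        omega
      · rw [if_neg hc] at hmw
        rw [hmw]
        push_neg at hc
        omega

/-- if `m = (0,1,0,1,…,0,1,0,…,0)` consists of `s` copies of `(0,1)`
followed by zeros, with `0 ≤ s ≤ ⌈(p-1)/2⌉`, then the class is valid: for every
codeword `c` of the all-ones SPC code of length `d` over `𝔽_p`,
`Σ_{i<d-1} t_{σ,c_i} + t_{0,c_d} ≤ 0`, where `σ` maximizes `t_{0,·}`. -/
theorem stmt16 (p : ℕ) [Fact p.Prime] (s : ℕ) (hs : s ≤ ((p - 1) + 1) / 2)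
    (m : ZMod p → ℕ)
    (hmform : ∀ j : ZMod p, m j = if j.val < 2 * s ∧ j.val % 2 = 1 then 1 else 0)
    (σ : ZMod p) (hσ : ∀ j, t0 p m j ≤ t0 p m σ) :
    ∀ d : ℕ, 1 ≤ d → ∀ c : Fin d → ZMod p, (∑ i, c i) = 0 →
      (∑ i : Fin d,
        (if (i : ℕ) < d - 1 then tb p m σ (c i) else t0 p m (c i))) ≤ 0 := by
  have hp : p.Prime := Fact.out
  haveI : NeZero p := ⟨hp.pos.ne'⟩
  have hp2 : 2 ≤ p := hp.two_le
  have h2s : 2 * s ≤ p := by omega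
  intro d hd c hc
  by_contra hpos
  push_neg at hpos
  set f : Fin d → ℤ :=
    fun i => if (i : ℕ) < d - 1 then tb p m σ (c i) else t0 p m (c i) with hf
  set L : Fin d := ⟨d - 1, by omega⟩ with hL
  have hsplit : ∑ i, f i = (∑ i ∈ Finset.univ.erase L, tb p m σ (c i)) + t0 p m (c L) := by
    rw [← Finset.sum_erase_add _ _ (Finset.mem_univ L)]
    congr 1
    · refine Finset.sum_congr rfl fun i hi => ?_
      have hiL : i ≠ L := (Finset.mem_erase.mp hi).1
      have : (i : ℕ) < d - 1 := by
        have := i.isLt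
        have : (i : ℕ) ≠ d - 1 := fun h => hiL (Fin.ext h)
        omega
      simp [hf, this]
    · simp [hf, hL]
  -- divisibility by p
  have hdvd : (p : ℤ) ∣ ∑ i, f i := by
    have hcast : ((∑ i, f i : ℤ) : ZMod p) = ∑ i, c i := by
      push_cast
      refine Finset.sum_congr rfl fun i _ => ?_
      by_cases hi : (i : ℕ) < d - 1
      · simp [hf, hi, tb_cast]
      · simp [hf, hi, t0_cast]
    rw [hc] at hcast
    exact (ZMod.intCast_zmod_eq_zero_iff_dvd _ p).mp hcast
  have hple : (p : ℤ) ≤ ∑ i, f i := Int.le_of_dvd hpos hdvd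
  have htbnp : ∀ j, tb p m σ j ≤ 0 := fun j => sub_nonpos.mpr (hσ _)
  have hT0 : (∑ i ∈ Finset.univ.erase L, tb p m σ (c i)) ≤ 0 :=
    Finset.sum_nonpos fun i _ => htbnp _
  set u : ℕ := (c L).val with hu
  have hup : u < p := ZMod.val_lt _
  have hmL := hmform (c L)
  by_cases hcL : u < 2 * s ∧ u % 2 = 1
  swap
  · -- m (c L) = 0, so the total is < p, contradiction
    rw [if_neg hcL] at hmL
    have ht : t0 p m (c L) = (u : ℤ) := by unfold t0; rw [← hu, hmL]; push_cast; ring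
    rw [hsplit, ht] at hple
    omega
  · rw [if_pos hcL] at hmL
    have hs1 : 1 ≤ s := by omega
    have ht : t0 p m (c L) = (u : ℤ) + p := by
      unfold t0; rw [← hu, hmL]; push_cast; ring
    -- the sum equals exactly p
    have hub : ∑ i, f i ≤ (u : ℤ) + p := by rw [hsplit, ht]; omega
    obtain ⟨k, hk⟩ := hdvd
    have hk1 : k = 1 := by nlinarith
    have hSp : ∑ i, f i = (p : ℤ) := by rw [hk, hk1, mul_one]
    by_cases hex : ∃ i ∈ Finset.univ.erase L, tb p m σ (c i) ≤ -(2 * s : ℤ)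
    · obtain ⟨i, hi, hti⟩ := hex
      have hTi : (∑ i' ∈ Finset.univ.erase L, tb p m σ (c i')) ≤ -(2 * s : ℤ) := by
        rw [← Finset.sum_erase_add _ _ hi]
        have : (∑ i' ∈ (Finset.univ.erase L).erase i, tb p m σ (c i')) ≤ 0 :=
          Finset.sum_nonpos fun i' _ => htbnp _
        omega
      rw [hsplit, ht] at hSp
      omega
    · push_neg at hex
      have hTdvd : (2 : ℤ) ∣ ∑ i' ∈ Finset.univ.erase L, tb p m σ (c i') := by
        refine Finset.dvd_sum fun i' hi' => ?_
        rcases key_s16 p s hp hs1 h2s m hmform σ hσ (c i') with h | h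
        · exact h
        · exact absurd h (not_le.mpr (hex i' hi'))
      rw [hsplit, ht] at hSp
      have : (∑ i' ∈ Finset.univ.erase L, tb p m σ (c i')) = -(u : ℤ) := by omega
      rw [this] at hTdvd
      omega
end

section
/- Any inequality from the Hi-Lo construction for the class m = (0,0,0) over 𝔽_3 applied to the all-ones ternary SPC code of length d ≥ 3 (i) cuts exactly d+1 vectors ζ ∈ 𝔽_3^d \ C, i.e., satisfies θ·F_v(ζ) > κ for exactly d+1 such ζ, and (ii) is tight (θ·F_v(c) = κ) for exactly d(d+1)/2 codewords c ∈ C. -/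
/-- Building block entries for `p = 3`, `m = (0,0,0)`:
`t_{k,j} = [j+k]_ℤ - [k]_ℤ` (so `t_0 = (0,1,2)`, `t_1 = (0,1,-1)`, `t_2 = (0,-2,-1)`). -/
def t3 (k j : ZMod 3) : ℤ := ((j + k).val : ℤ) - (k.val : ℤ)

/-!
The substitution `x_i = 2 - ζ_i - k_i` is an involution of `𝔽_3^d`, and since
`t_{k,j} = 2 - [2 - j - k] - [k]` it turns the left-hand side into
`2d - s - Σ [k_i]`, where `s = Σ [x_i]` is the digit sum of `x`. Hence `ζ` violates the
inequality iff `s ≤ 1` and makes it tight iff `s = 2`; moreover `Σ ζ_i = 2 - s` in `𝔽_3` by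
the congruence on `Σ k_i`, so these `ζ` are automatically non-codewords, resp. codewords.
Digit sums `0, 1, 2` are attained by `1`, `d` and `d(d+1)/2` vectors respectively.
-/

open Finset

def digitSum {n : ℕ} (x : Fin n → ZMod 3) : ℕ := ∑ i, (x i).val

lemma card_add_digitSum_eq {n : ℕ} (a j : ℕ) :
    #{y : Fin n → ZMod 3 | a + digitSum y = j} =
      if a ≤ j then #{y : Fin n → ZMod 3 | digitSum y = j - a} else 0 := by
  split_ifs with h
  · congr 1; ext y; simp only [mem_filter, mem_univ, true_and]; omega
  · rw [card_eq_zero, filter_eq_empty_iff]; intro y _; omega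

lemma card_digitSum_eq_succ (n j : ℕ) :
    #{x : Fin (n + 1) → ZMod 3 | digitSum x = j} =
      #{y : Fin n → ZMod 3 | digitSum y = j}
        + (if 1 ≤ j then #{y : Fin n → ZMod 3 | digitSum y = j - 1} else 0)
        + (if 2 ≤ j then #{y : Fin n → ZMod 3 | digitSum y = j - 2} else 0) := by
  have hcons : ∀ p : ZMod 3 × (Fin n → ZMod 3),
      digitSum (Fin.consEquiv (fun _ => ZMod 3) p) = p.1.val + digitSum p.2 := fun p => by
    simp [digitSum, Fin.consEquiv, Fin.sum_univ_succ]
  have hsplit : #{x : Fin (n + 1) → ZMod 3 | digitSum x = j} =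
      ∑ a : ZMod 3, #{y : Fin n → ZMod 3 | a.val + digitSum y = j} := by
    simp only [card_filter]
    rw [← Fintype.sum_equiv (Fin.consEquiv fun _ => ZMod 3) _ _ (fun p => by rw [hcons]),
      Fintype.sum_prod_type]
  rw [hsplit]
  exact (Fin.sum_univ_three _).trans (by simp only [card_add_digitSum_eq]; rfl)

lemma card_digitSum_eq_zero (n : ℕ) : #{x : Fin n → ZMod 3 | digitSum x = 0} = 1 := by
  induction n with
  | zero => rfl
  | succ n ih => simp [card_digitSum_eq_succ, ih]

lemma card_digitSum_eq_one (n : ℕ) : #{x : Fin n → ZMod 3 | digitSum x = 1} = n := by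
  induction n with
  | zero => rfl
  | succ n ih => simp [card_digitSum_eq_succ, ih, card_digitSum_eq_zero]

lemma card_digitSum_eq_two (n : ℕ) :
    #{x : Fin n → ZMod 3 | digitSum x = 2} = n * (n + 1) / 2 := by
  induction n with
  | zero => rfl
  | succ n ih =>
    norm_num [card_digitSum_eq_succ, ih, card_digitSum_eq_one, card_digitSum_eq_zero]
    rw [show (n + 1) * (n + 1 + 1) = n * (n + 1) + (n + 1) * 2 by ring,
      Nat.add_mul_div_right _ _ two_pos]
    ring

lemma card_digitSum_le_one (n : ℕ) : #{x : Fin n → ZMod 3 | digitSum x ≤ 1} = n + 1 := by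
  simp only [Nat.le_one_iff_eq_zero_or_eq_one, filter_or]
  rw [card_union_of_disjoint (disjoint_filter.2 fun _ _ h => by omega),
    card_digitSum_eq_zero, card_digitSum_eq_one, add_comm]

section HiLoReflect

variable {d : ℕ} (k : Fin d → ZMod 3)

def hiLoReflect (ζ : Fin d → ZMod 3) : Fin d → ZMod 3 := fun i => 2 - ζ i - k i

lemma hiLoReflect_involutive : Function.Involutive (hiLoReflect k) :=
  fun ζ => funext fun i => by simp only [hiLoReflect]; ring

lemma t3_eq_two_sub (k j : ZMod 3) : t3 k j = 2 - ((2 - j - k).val : ℤ) - k.val := by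
  revert k j; decide

lemma sum_t3_eq (ζ : Fin d → ZMod 3) :
    ∑ i, t3 (k i) (ζ i) = 2 * d - digitSum (hiLoReflect k ζ) - ∑ i, ((k i).val : ℤ) := by
  simp only [t3_eq_two_sub, digitSum, hiLoReflect, sum_sub_distrib, sum_const, card_univ,
    Fintype.card_fin]
  push_cast
  ring

variable {k}

lemma sum_eq_two_sub_digitSum (hd : 1 ≤ d) (hk : ∑ i, k i = ((d - 1 : ℕ) : ZMod 3) * 2)
    (ζ : Fin d → ZMod 3) : ∑ i, ζ i = 2 - digitSum (hiLoReflect k ζ) := by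
  simp only [digitSum, hiLoReflect, Nat.cast_sum, ZMod.natCast_val, ZMod.cast_id', id,
    sum_sub_distrib, sum_const, card_univ, Fintype.card_fin, nsmul_eq_mul, hk, Nat.cast_sub hd,
    Nat.cast_one]
  ring

lemma two_sub_natCast_eq_zero_iff {s : ℕ} (hs : s ≤ 2) : (2 : ZMod 3) - s = 0 ↔ s = 2 := by
  interval_cases s <;> decide

lemma hiLo_cut_iff (hd : 1 ≤ d) (hk : ∑ i, k i = ((d - 1 : ℕ) : ZMod 3) * 2)
    (ζ : Fin d → ZMod 3) :
    (∑ i, ζ i ≠ 0 ∧ 2 * ((d : ℤ) - 1) - ∑ i, ((k i).val : ℤ) < ∑ i, t3 (k i) (ζ i)) ↔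
      digitSum (hiLoReflect k ζ) ≤ 1 := by
  rw [sum_t3_eq, sum_eq_two_sub_digitSum hd hk]
  constructor
  · rintro ⟨-, h⟩; omega
  · intro h
    exact ⟨fun h0 => by have := (two_sub_natCast_eq_zero_iff (by omega)).1 h0; omega, by omega⟩

lemma hiLo_tight_iff (hd : 1 ≤ d) (hk : ∑ i, k i = ((d - 1 : ℕ) : ZMod 3) * 2)
    (ζ : Fin d → ZMod 3) :
    (∑ i, ζ i = 0 ∧ ∑ i, t3 (k i) (ζ i) = 2 * ((d : ℤ) - 1) - ∑ i, ((k i).val : ℤ)) ↔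
      digitSum (hiLoReflect k ζ) = 2 := by
  rw [sum_t3_eq, sum_eq_two_sub_digitSum hd hk]
  constructor
  · rintro ⟨-, h⟩; omega
  · intro h
    exact ⟨(two_sub_natCast_eq_zero_iff h.le).2 h, by omega⟩

end HiLoReflect

lemma ncard_preimage_hiLoReflect {d : ℕ} (k : Fin d → ZMod 3) (S : Set (Fin d → ZMod 3)) :
    (hiLoReflect k ⁻¹' S).ncard = S.ncard :=
  have hbij := (hiLoReflect_involutive k).bijective
  Set.ncard_preimage_of_injective_subset_range hbij.1 (by simp [hbij.2.range_eq])

/-- a Hi-Lo inequality for the class `m = (0,0,0)` over `𝔽_3` and the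
all-ones ternary SPC code of length `d ≥ 3` cuts exactly `d+1` non-codewords and is
tight for exactly `d(d+1)/2` codewords. -/
theorem stmt17 (d : ℕ) (hd : 3 ≤ d) (k : Fin d → ZMod 3)
    (hk : (∑ i, k i) = ((d - 1 : ℕ) : ZMod 3) * 2)
    (κ : ℤ) (hκ : κ = 2 * ((d : ℤ) - 1) - ∑ i, ((k i).val : ℤ)) :
    {ζ : Fin d → ZMod 3 | (∑ i, ζ i) ≠ 0 ∧ κ < ∑ i, t3 (k i) (ζ i)}.ncard = d + 1 ∧
    {c : Fin d → ZMod 3 | (∑ i, c i) = 0 ∧ (∑ i, t3 (k i) (c i)) = κ}.ncard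
      = d * (d + 1) / 2 := by
  subst hκ
  have hd₁ : 1 ≤ d := by omega
  rw [(Set.ext (hiLo_cut_iff hd₁ hk) : {ζ | _} = hiLoReflect k ⁻¹' {x | digitSum x ≤ 1}),
    (Set.ext (hiLo_tight_iff hd₁ hk) : {c | _} = hiLoReflect k ⁻¹' {x | digitSum x = 2}),
    ncard_preimage_hiLoReflect, ncard_preimage_hiLoReflect]
  simpa [Set.ncard_eq_toFinset_card'] using ⟨card_digitSum_le_one d, card_digitSum_eq_two d⟩
end

section
/- For p = 2, the building block class with m = (0,1) (blocks t_0 = (0,3), t_1 = (0,-3)) is equivalent to the class with m' = (0,0) (blocks (0,1), (0,-1)) in the following sense: an inequality θ·x ≤ κ is in Φ(Θ^{(0,1)}) if and only if (1/3)θ·x ≤ (1/3)κ is in Φ(Θ^{(0,0)}). For odd primes p, if two inequalities from distinct classes m ≠ m' satisfy θ = a·θ' and κ = a·κ' with 0 < a ≤ 1, then m = (0,...,0), m' = (0,1,0,1,...), and a = 1/2. -/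
/-- Membership of the inequality `θ·x ≤ κ` in `Φ(Θ^m)`: it is obtained from the
Hi-Lo construction for the class `m` (with maximizer index `σ`) followed by a
rotation by multiplication with some nonzero `h ∈ 𝔽_p`. -/
def inPhiTheta (p d : ℕ) (m : ZMod p → ℕ) (σ : ZMod p)
    (θ : Fin d → ZMod p → ℝ) (κ : ℝ) : Prop :=
  ∃ h : ZMod p, h ≠ 0 ∧ ∃ k : Fin d → ZMod p,
    (∑ i, k i) = ((d - 1 : ℕ) : ZMod p) * σ ∧
    (∀ i j, θ i j = ((tb p m (k i) (h * j) : ℤ) : ℝ)) ∧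
    κ = ((((d : ℤ) - 1) * t0 p m σ - ∑ i, t0 p m (k i) : ℤ) : ℝ)


lemma tb3 : ∀ k j : ZMod 2, tb 2 (fun j => j.val) k j = 3 * tb 2 (fun _ => 0) k j := by decide

lemma t03 : ∀ j : ZMod 2, t0 2 (fun j => j.val) j = 3 * t0 2 (fun _ => 0) j := by decide

lemma aux_cast (p : ℕ) [NeZero p] (m : ZMod p → ℕ) (t : ZMod p) :
    ((t0 p m t : ℤ) : ZMod p) = t := by
  simp [t0, ZMod.natCast_val, ZMod.cast_id, ZMod.natCast_self]

lemma aux_tb_cast (p : ℕ) [NeZero p] (m : ZMod p → ℕ) (c j : ZMod p) :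
    ((tb p m c j : ℤ) : ZMod p) = j := by
  simp [tb, aux_cast]

lemma aux_inj (p : ℕ) [NeZero p] (m : ZMod p → ℕ) :
    Function.Injective (t0 p m) := by
  intro s t hst
  have : ((t0 p m s : ℤ) : ZMod p) = ((t0 p m t : ℤ) : ZMod p) := by rw [hst]
  rwa [aux_cast, aux_cast] at this

lemma aux_nonneg (p : ℕ) (m : ZMod p → ℕ) (t : ZMod p) : 0 ≤ t0 p m t := by
  unfold t0; positivity

lemma aux_zero (p : ℕ) [NeZero p] (m : ZMod p → ℕ) (hm0 : m 0 = 0) : t0 p m 0 = 0 := by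
  simp [t0, hm0, ZMod.val_zero]

lemma aux_le (p : ℕ) [NeZero p] (m : ZMod p → ℕ) (hm : ∀ t, m t = 0 ∨ m t = 1) (t : ZMod p) :
    t0 p m t ≤ 2 * p - 1 := by
  have h1 : t.val < p := ZMod.val_lt t
  have h2 := hm t
  unfold t0
  rcases h2 with h2 | h2 <;> rw [h2] <;> push_cast <;> omega


/-- (i) for `p = 2`, `Φ(Θ^{(0,1)})` and `Φ(Θ^{(0,0)})` are equivalent
up to scaling by `1/3`; (ii) for odd primes `p`, if inequalities of two distinct
classes are positive scalar multiples of each other (with factor `0 < a ≤ 1`),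
then `m = 0`, `m' = (0,1,0,1,…)`, and `a = 1/2`. -/
theorem stmt18 :
    (∀ d : ℕ, 1 ≤ d → ∀ (θ : Fin d → ZMod 2 → ℝ) (κ : ℝ),
      inPhiTheta 2 d (fun j => j.val) 1 θ κ ↔
        inPhiTheta 2 d (fun _ => 0) 1 (fun i j => θ i j / 3) (κ / 3)) ∧
    (∀ p : ℕ, p.Prime → 2 < p → ∀ d : ℕ, 1 ≤ d →
      ∀ m m' : ZMod p → ℕ,
        (∀ j, m j = 0 ∨ m j = 1) → (∀ j, m' j = 0 ∨ m' j = 1) →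
        m 0 = 0 → m' 0 = 0 → m ≠ m' →
        ∀ σ σ' : ZMod p,
          (∀ j, t0 p m j ≤ t0 p m σ) → (∀ j, t0 p m' j ≤ t0 p m' σ') →
          ∀ (θ θ' : Fin d → ZMod p → ℝ) (κ κ' : ℝ) (a : ℝ),
            0 < a → a ≤ 1 →
            inPhiTheta p d m σ θ κ → inPhiTheta p d m' σ' θ' κ' →
            (∀ i j, θ i j = a * θ' i j) → κ = a * κ' →
            ((∀ j, m j = 0) ∧
              (∀ j : ZMod p, m' j = if j.val % 2 = 1 then 1 else 0) ∧
              a = 1 / 2)) := by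
  constructor
  · intro d hd θ κ
    constructor
    · rintro ⟨h, hh, k, hsum, hθ, hκ⟩
      refine ⟨h, hh, k, hsum, fun i j => ?_, ?_⟩
      · show θ i j / 3 = _
        rw [hθ i j, tb3]; push_cast; ring
      · rw [hκ]
        have : (((d : ℤ) - 1) * t0 2 (fun j => j.val) 1 - ∑ i, t0 2 (fun j => j.val) (k i) : ℤ)
            = 3 * (((d : ℤ) - 1) * t0 2 (fun _ => 0) 1 - ∑ i, t0 2 (fun _ => 0) (k i) : ℤ) := by
          simp only [t03, ← Finset.mul_sum]; ring
        rw [this]; push_cast; ring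
    · rintro ⟨h, hh, k, hsum, hθ, hκ⟩
      refine ⟨h, hh, k, hsum, fun i j => ?_, ?_⟩
      · have := hθ i j
        simp only [] at this
        field_simp at this
        rw [this, tb3]; push_cast; ring
      · have : κ = 3 * ((((d : ℤ) - 1) * t0 2 (fun _ => 0) 1 - ∑ i, t0 2 (fun _ => 0) (k i) : ℤ) : ℝ) := by
          rw [← hκ]; ring
        rw [this]
        have h2 : (((d : ℤ) - 1) * t0 2 (fun j => j.val) 1 - ∑ i, t0 2 (fun j => j.val) (k i) : ℤ)
            = 3 * (((d : ℤ) - 1) * t0 2 (fun _ => 0) 1 - ∑ i, t0 2 (fun _ => 0) (k i) : ℤ) := by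
          simp only [t03, ← Finset.mul_sum]; ring
        rw [h2]; push_cast; ring
  · intro p hp hp2 d hd m m' hm hm' hm0 hm'0 hne σ σ' hσ hσ' θ θ' κ κ' a ha0 ha1 hin hin' hθa hκa
    haveI : Fact p.Prime := ⟨hp⟩
    obtain ⟨h, hh, k, hksum, hθ, hκ⟩ := hin
    obtain ⟨h', hh', k', hk'sum, hθ', hκ'⟩ := hin'
    set g : ZMod p := h' * h⁻¹ with hg_def
    have hg : g ≠ 0 := mul_ne_zero hh' (inv_ne_zero hh)
    have key : ∀ (i : Fin d) (s : ZMod p),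
        ((tb p m (k i) s : ℤ) : ℝ) = a * ((tb p m' (k' i) (g * s) : ℤ) : ℝ) := by
      intro i s
      have h1 := hθa i (h⁻¹ * s)
      rw [hθ i (h⁻¹ * s), hθ' i (h⁻¹ * s)] at h1
      have e1 : h * (h⁻¹ * s) = s := by
        rw [← mul_assoc, mul_inv_cancel₀ hh, one_mul]
      have e2 : h' * (h⁻¹ * s) = g * s := by rw [hg_def]; ring
      rw [e1, e2] at h1
      exact h1
    have i0 : Fin d := ⟨0, hd⟩
    set A : ℤ := tb p m (k i0) 1 with hA_def
    set B : ℤ := tb p m' (k' i0) (g * 1) with hB_def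
    have hB : B ≠ 0 := by
      intro h0
      have := aux_tb_cast p m' (k' i0) (g * 1)
      rw [← hB_def, h0] at this
      simp at this
      exact hg this.symm
    have hBR : (B : ℝ) ≠ 0 := Int.cast_ne_zero.mpr hB
    have haAB : (A : ℝ) = a * B := key i0 1
    set q : ℚ := (A : ℚ) / (B : ℚ) with hq_def
    have hqa : (q : ℝ) = a := by
      rw [hq_def]
      push_cast
      rw [haAB]
      field_simp
    have hq0 : 0 < q := by
      have : (0 : ℝ) < (q : ℝ) := by rw [hqa]; exact ha0
      exact_mod_cast this
    have hq1 : q ≤ 1 := by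
      have : (q : ℝ) ≤ 1 := by rw [hqa]; exact ha1
      exact_mod_cast this
    have hnum0 : 0 < q.num := Rat.num_pos.mpr hq0
    have keyZ : ∀ (i : Fin d) (s : ZMod p),
        (q.den : ℤ) * tb p m (k i) s = q.num * tb p m' (k' i) (g * s) := by
      intro i s
      have h1 := key i s
      rw [← hqa] at h1
      have hnd : ((q.num : ℚ) : ℝ) = (q : ℝ) * ((q.den : ℚ) : ℝ) := by
        exact_mod_cast congrArg (fun x : ℚ => (x : ℝ)) (Rat.mul_den_eq_num q).symm
      have h2 : ((q.den : ℤ) : ℝ) * ((tb p m (k i) s : ℤ) : ℝ)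
          = ((q.num : ℤ) : ℝ) * ((tb p m' (k' i) (g * s) : ℤ) : ℝ) := by
        rw [h1]
        push_cast at hnd ⊢
        rw [hnd]
        ring
      exact_mod_cast h2
    have hcop : IsCoprime (q.num) (q.den : ℤ) := by
      rw [Int.isCoprime_iff_gcd_eq_one]
      simpa [Int.gcd] using q.reduced
    have hdvd' : ∀ t : ZMod p, (q.den : ℤ) ∣ t0 p m' t := by
      have hstep : ∀ t : ZMod p, (q.den : ℤ) ∣ (t0 p m' t - t0 p m' (k' i0)) := by
        intro t
        have h1 := keyZ i0 (g⁻¹ * (t - k' i0))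
        have e : g * (g⁻¹ * (t - k' i0)) = t - k' i0 := by
          rw [← mul_assoc, mul_inv_cancel₀ hg, one_mul]
        rw [e] at h1
        have h2 : (q.den : ℤ) ∣ q.num * tb p m' (k' i0) (t - k' i0) :=
          ⟨tb p m (k i0) (g⁻¹ * (t - k' i0)), h1.symm⟩
        have h3 := (hcop.symm).dvd_of_dvd_mul_left h2
        simpa [tb, sub_add_cancel] using h3
      intro t
      have h1 := hstep t
      have h2 := hstep 0
      rw [aux_zero p m' hm'0] at h2
      have h3 : (q.den : ℤ) ∣ t0 p m' (k' i0) := (dvd_neg).mp (by simpa using h2)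
      have := dvd_add h1 h3
      simpa using this
    have hden2 : q.den ≤ 2 := by
      by_contra hw
      push_neg at hw
      have hdpos : 0 < q.den := q.pos
      set N : ℕ := (2 * p - 1) / q.den + 1 with hN_def
      have hφ : ∀ t : ZMod p, (t0 p m' t).toNat / q.den < N := by
        intro t
        have h1 : (t0 p m' t).toNat ≤ 2 * p - 1 := by
          have := aux_le p m' hm' t
          omega
        have := Nat.div_le_div_right (c := q.den) h1
        omega
      have hinj : Function.Injective (fun t : ZMod p => (⟨(t0 p m' t).toNat / q.den, hφ t⟩ : Fin N)) := by
        intro s t hst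
        simp only [Fin.mk.injEq] at hst
        have hds : q.den ∣ (t0 p m' s).toNat := by
          have h9 := hdvd' s
          have hnn := aux_nonneg p m' s
          rw [← Int.toNat_of_nonneg hnn] at h9
          exact_mod_cast h9
        have hdt : q.den ∣ (t0 p m' t).toNat := by
          have h9 := hdvd' t
          have hnn := aux_nonneg p m' t
          rw [← Int.toNat_of_nonneg hnn] at h9
          exact_mod_cast h9
        have h4 : (t0 p m' s).toNat = (t0 p m' t).toNat := by
          obtain ⟨u, hu⟩ := hds
          obtain ⟨v, hv⟩ := hdt
          rw [hu, hv] at hst ⊢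
          rw [Nat.mul_div_cancel_left u hdpos, Nat.mul_div_cancel_left v hdpos] at hst
          rw [hst]
        apply aux_inj p m'
        have hnns := aux_nonneg p m' s
        have hnnt := aux_nonneg p m' t
        omega
      have hcard := Fintype.card_le_of_injective _ hinj
      rw [ZMod.card, Fintype.card_fin] at hcard
      have h5 : q.den * (p - 1) ≤ 2 * p - 1 := by
        have h6 : p - 1 ≤ (2 * p - 1) / q.den := by omega
        calc q.den * (p - 1) ≤ q.den * ((2 * p - 1) / q.den) := Nat.mul_le_mul_left _ h6
          _ ≤ 2 * p - 1 := Nat.mul_div_le _ _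
      have h7 : 3 * (p - 1) ≤ q.den * (p - 1) := Nat.mul_le_mul_right _ (by omega)
      omega
    have hdpos : 0 < q.den := q.pos
    -- now case on q.den
    have hden12 : q.den = 1 ∨ q.den = 2 := by omega
    rcases hden12 with hden | hden
    · -- q.den = 1 : derive contradiction
      exfalso
      have hq_num : (q.num : ℚ) = q := by
        rw [← Rat.num_div_den q, hden]
        simp
      have hnum1 : q.num = 1 := by
        have : (q.num : ℚ) ≤ 1 := by rw [hq_num]; exact hq1
        have h7 : q.num ≤ 1 := by exact_mod_cast this
        omega
      have keyZ1 : ∀ (i : Fin d) (s : ZMod p),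
          tb p m (k i) s = tb p m' (k' i) (g * s) := by
        intro i s
        have := keyZ i s
        rw [hden, hnum1] at this
        simpa using this
      have hg1 : g = 1 := by
        have h1 := keyZ1 i0 1
        have h2 : ((tb p m (k i0) 1 : ℤ) : ZMod p) = ((tb p m' (k' i0) (g * 1) : ℤ) : ZMod p) := by
          rw [h1]
        rw [aux_tb_cast, aux_tb_cast] at h2
        simpa using h2.symm
      have hrel : ∀ (i : Fin d) (t : ZMod p),
          t0 p m t = t0 p m' (t + (k' i - k i)) - (t0 p m' (k' i) - t0 p m (k i)) := by
        intro i t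
        have h1 := keyZ1 i (t - k i)
        rw [hg1, one_mul] at h1
        unfold tb at h1
        have e1 : t - k i + k i = t := by ring
        have e2 : t - k i + k' i = t + (k' i - k i) := by ring
        rw [e1, e2] at h1
        linarith
      have hCsum : ∀ i : Fin d,
          (p : ℤ) * (t0 p m' (k' i) - t0 p m (k i)) = (p : ℤ) * (t0 p m' (k' i0) - t0 p m (k i0)) := by
        intro i
        have h1 : ∑ t : ZMod p, (t0 p m' (t + (k' i - k i)) - (t0 p m' (k' i) - t0 p m (k i)))
            = ∑ t : ZMod p, (t0 p m' (t + (k' i0 - k i0)) - (t0 p m' (k' i0) - t0 p m (k i0))) := by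
          apply Finset.sum_congr rfl
          intro t _
          rw [← hrel i t, ← hrel i0 t]
        have h2 : ∀ (cc : ZMod p) (CC : ℤ), ∑ t : ZMod p, (t0 p m' (t + cc) - CC)
            = (∑ t : ZMod p, t0 p m' t) - (p : ℤ) * CC := by
          intro cc CC
          rw [Finset.sum_sub_distrib, Finset.sum_const, Finset.card_univ, ZMod.card,
            nsmul_eq_mul]
          congr 1
          exact Fintype.sum_equiv (Equiv.addRight cc) _ _ (fun t => rfl)
        rw [h2, h2] at h1
        omega
      have hCeq : ∀ i : Fin d,
          t0 p m' (k' i) - t0 p m (k i) = t0 p m' (k' i0) - t0 p m (k i0) := by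
        intro i
        have hpne : (p : ℤ) ≠ 0 := by positivity
        exact mul_left_cancel₀ hpne (hCsum i)
      have hceq : ∀ i : Fin d, k' i - k i = k' i0 - k i0 := by
        intro i
        have h1 := hrel i 0
        have h2 := hrel i0 0
        rw [hCeq i] at h1
        have h3 : t0 p m' (0 + (k' i - k i)) = t0 p m' (0 + (k' i0 - k i0)) := by omega
        have h4 := aux_inj p m' h3
        simpa using h4
      set c : ZMod p := k' i0 - k i0 with hc_def
      set C : ℤ := t0 p m' (k' i0) - t0 p m (k i0) with hC_def
      have hmax : ∀ s : ZMod p, t0 p m' s ≤ t0 p m' (σ + c) := by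
        intro s
        have h1 := hrel i0 (s - c)
        have e1 : s - c + (k' i0 - k i0) = s := by rw [← hc_def]; ring
        rw [e1] at h1
        have h2 := hrel i0 σ
        rw [← hc_def] at h2
        have h3 := hσ (s - c)
        omega
      have hσσ' : σ' = σ + c := by
        apply aux_inj p m'
        exact le_antisymm (hmax σ') (hσ' (σ + c))
      have hc0 : c = 0 := by
        have h1 : ∀ i : Fin d, k' i = k i + c := by
          intro i
          have h5 := hceq i
          rw [← h5]; ring
        have h2 : ∑ i, k' i = ∑ i, k i + (d : ZMod p) * c := by
          calc ∑ i, k' i = ∑ i : Fin d, (k i + c) := by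
                apply Finset.sum_congr rfl; intro i _; exact h1 i
            _ = ∑ i, k i + (d : ZMod p) * c := by
                rw [Finset.sum_add_distrib, Finset.sum_const, Finset.card_univ, Fintype.card_fin,
                  nsmul_eq_mul]
        rw [hksum, hk'sum, hσσ'] at h2
        have hd1 : ((d - 1 : ℕ) : ZMod p) = (d : ZMod p) - 1 := by
          rw [Nat.cast_sub hd, Nat.cast_one]
        rw [hd1] at h2
        have h3 : ((d : ZMod p) - 1) * c = (d : ZMod p) * c := by ring_nf; ring_nf at h2; linear_combination h2
        have h4 : c = 0 := by linear_combination h3.symm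
        exact h4
      have hC0 : C = 0 := by
        have h1 := hrel i0 0
        rw [← hc_def, ← hC_def, hc0] at h1
        simp only [add_zero] at h1
        rw [aux_zero p m hm0, aux_zero p m' hm'0] at h1
        omega
      have hmm' : m = m' := by
        funext t
        have h1 := hrel i0 t
        rw [← hc_def, ← hC_def, hc0, hC0] at h1
        simp only [add_zero, sub_zero] at h1
        unfold t0 at h1
        have h2 : (m t : ℤ) * p = (m' t : ℤ) * p := by omega
        have hpne : (p : ℤ) ≠ 0 := by positivity
        have := mul_right_cancel₀ hpne h2
        exact_mod_cast this
      exact hne hmm'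
    · -- q.den = 2
      have hpodd : p % 2 = 1 := Nat.odd_iff.mp (hp.odd_of_ne_two (by omega))
      have hdvd2 : ∀ t : ZMod p, (2 : ℤ) ∣ t0 p m' t := by
        intro t
        have := hdvd' t
        rwa [hden] at this
      have conj2 : ∀ t : ZMod p, m' t = if t.val % 2 = 1 then 1 else 0 := by
        intro t
        have h1 := hdvd2 t
        unfold t0 at h1
        have h2 : (2 : ℤ) ∣ ((t.val + m' t * p : ℕ) : ℤ) := by push_cast; exact_mod_cast h1
        have h3 : 2 ∣ t.val + m' t * p := Int.ofNat_dvd.mp h2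
        rcases hm' t with h4 | h4 <;> rw [h4] at h3 ⊢ <;> split_ifs with h5 <;> omega
      have hnum1 : q.num = 1 := by
        have h1 : (q.num : ℚ) = q * q.den := (Rat.mul_den_eq_num q).symm
        have h2 : (q.num : ℚ) ≤ 2 := by
          rw [h1, hden]
          calc q * (2 : ℕ) ≤ 1 * (2 : ℕ) :=
                mul_le_mul_of_nonneg_right hq1 (by norm_num)
            _ = 2 := by norm_num
        have h3 : q.num ≤ 2 := by exact_mod_cast h2
        have h4 : q.num ≠ 2 := by
          intro h5
          have h6 := q.reduced
          rw [h5, hden] at h6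
          norm_num [Int.natAbs] at h6
        omega
      have ha_half : a = 1 / 2 := by
        rw [← hqa, ← Rat.num_div_den q, hnum1, hden]
        norm_num
      refine ⟨?_, conj2, ha_half⟩
      -- m = 0
      have keyZ2 : ∀ (i : Fin d) (s : ZMod p),
          2 * tb p m (k i) s = tb p m' (k' i) (g * s) := by
        intro i s
        have := keyZ i s
        rw [hden, hnum1] at this
        simpa using this
      set k0 : ZMod p := k i0 with hk0_def
      set k0' : ZMod p := k' i0 with hk0'_def
      have hrel2 : ∀ s : ZMod p,
          2 * (t0 p m (s + k0) - t0 p m k0) = t0 p m' (g * s + k0') - t0 p m' k0' := by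
        intro s
        have := keyZ2 i0 s
        unfold tb at this
        exact this
      have hE : t0 p m' k0' = 2 * t0 p m k0 := by
        have ha' := hrel2 (-k0)
        rw [neg_add_cancel, aux_zero p m hm0] at ha'
        have hb' := hrel2 (g⁻¹ * (-k0'))
        have e : g * (g⁻¹ * (-k0')) = -k0' := by
          rw [← mul_assoc, mul_inv_cancel₀ hg, one_mul]
        rw [e, neg_add_cancel, aux_zero p m' hm'0] at hb'
        have h1 := aux_nonneg p m' (g * (-k0) + k0')
        have h2 := aux_nonneg p m (g⁻¹ * (-k0') + k0)
        omega
      have hbound : ∀ s : ZMod p, t0 p m' s ≤ 2 * (p : ℤ) - 2 := by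
        intro s
        have h1 := conj2 s
        have h2 : s.val < p := ZMod.val_lt s
        unfold t0
        rw [h1]
        split_ifs with h3 <;> push_cast <;> omega
      intro u
      have h1 := hrel2 (u - k0)
      have e1 : u - k0 + k0 = u := by ring
      rw [e1] at h1
      have h2 : 2 * t0 p m u = t0 p m' (g * (u - k0) + k0') := by omega
      have h3 := hbound (g * (u - k0) + k0')
      have h4 : t0 p m u ≤ (p : ℤ) - 1 := by omega
      unfold t0 at h4
      have h5 : u.val < p := ZMod.val_lt u
      rcases hm u with h6 | h6
      · exact h6
      · rw [h6] at h4; push_cast at h4; omega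
end

section
/- Let p be a prime and C = {c ∈ 𝔽_p^d: Σ c_i = 0} the all-ones SPC code of length d. Let the class m = (0,...,0) have building blocks t_k, where t_{k,j} takes values in {0,...,p-1} shifted, with t_{0,σ} = p-1 (σ = p-1). Suppose a point x ∈ (S_{p-1})^d ⊂ ℝ^{dp} (each block x_i a probability vector over 𝔽_p) has exactly one block x_n that is fractional (not a unit vector) and all other blocks equal to unit vectors. Then there exists a choice of k_1,...,k_d ∈ ℤ/pℤ with Σ k_i = (d-1)σ such that Σ_{i=1}^d (t_{0,σ} - t_{0,k_i} - t_{k_i}·x_i) < t_{0,σ} = p-1, i.e., the corresponding Hi-Lo inequality cuts x. -/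
lemma tb_zero (p : ℕ) (k j : ZMod p) :
    tb p (fun _ => 0) k j = ((j + k).val : ℤ) - (k.val : ℤ) := by
  simp [tb, t0]


/-- for the class `m = 0` (so `σ = -1`, `t_{0,σ} = p-1`) and a point
`x ∈ S_{p-1}^d` with exactly one fractional block `x_n` (all other blocks unit
vectors), there is a choice of `k_1,…,k_d` with `Σ k_i = (d-1)σ` such that
`Σ_i (t_{0,σ} - t_{0,k_i} - t_{k_i}·x_i) < p - 1`; i.e., the corresponding Hi-Lo
inequality cuts `x`. -/
theorem stmt19 (p : ℕ) [Fact p.Prime] (d : ℕ) (hd : 1 ≤ d)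
    (x : Fin d → ZMod p → ℝ)
    (hsimplex : ∀ i : Fin d, (∀ j, 0 ≤ x i j) ∧ ∑ j, x i j = 1)
    (n : Fin d)
    (hfrac : ¬ ∃ j : ZMod p, x n = fun δ => if δ = j then (1 : ℝ) else 0)
    (hunit : ∀ i : Fin d, i ≠ n →
      ∃ j : ZMod p, x i = fun δ => if δ = j then (1 : ℝ) else 0) :
    ∃ k : Fin d → ZMod p,
      (∑ i, k i) = ((d - 1 : ℕ) : ZMod p) * (-1) ∧
      (∑ i : Fin d,
          (((p : ℝ) - 1) - (((k i).val : ℕ) : ℝ) -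
            ∑ j : ZMod p, ((tb p (fun _ => 0) (k i) j : ℤ) : ℝ) * x i j))
        < (p : ℝ) - 1 := by
  classical
  have hp : p.Prime := Fact.out
  haveI : NeZero p := ⟨hp.ne_zero⟩
  set J : Fin d → ZMod p := fun i => if h : i = n then 0 else (hunit i h).choose with hJ
  have hJspec : ∀ i (h : i ≠ n), x i = fun δ => if δ = J i then 1 else 0 := by
    intro i h
    simp only [hJ, dif_neg h]
    exact (hunit i h).choose_spec
  set kk : Fin d → ZMod p := fun i =>
    if i = n then ((d - 1 : ℕ) : ZMod p) * (-1) - ∑ i ∈ Finset.univ.erase n, (-1 - J i)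
    else -1 - J i with hkk
  refine ⟨kk, ?_, ?_⟩
  · rw [← Finset.add_sum_erase _ _ (Finset.mem_univ n)]
    have h2 : ∑ i ∈ Finset.univ.erase n, kk i
        = ∑ i ∈ Finset.univ.erase n, (-1 - J i) := by
      refine Finset.sum_congr rfl fun i hi => ?_
      simp [hkk, (Finset.mem_erase.mp hi).1]
    rw [h2]
    simp [hkk]
  · have hsum : ∀ i, (((p : ℝ) - 1) - (((kk i).val : ℕ) : ℝ) -
          ∑ j, ((tb p (fun _ => 0) (kk i) j : ℤ) : ℝ) * x i j)
        = ((p : ℝ) - 1) - ∑ j, (((j + kk i).val : ℕ) : ℝ) * x i j := by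
      intro i
      have h1 : ∑ j, ((tb p (fun _ => 0) (kk i) j : ℤ) : ℝ) * x i j
          = (∑ j, (((j + kk i).val : ℕ) : ℝ) * x i j) - ((kk i).val : ℝ) := by
        have : ∀ j : ZMod p, ((tb p (fun _ => 0) (kk i) j : ℤ) : ℝ) * x i j
            = (((j + kk i).val : ℕ) : ℝ) * x i j - ((kk i).val : ℝ) * x i j := by
          intro j
          rw [tb_zero]; push_cast; ring
        rw [Finset.sum_congr rfl fun j _ => this j, Finset.sum_sub_distrib,
          ← Finset.mul_sum, (hsimplex i).2, mul_one]
      rw [h1]; ring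
    rw [Finset.sum_congr rfl fun i _ => hsum i]
    rw [← Finset.add_sum_erase _ _ (Finset.mem_univ n)]
    have hzero : ∀ i ∈ Finset.univ.erase n,
        ((p : ℝ) - 1) - ∑ j, (((j + kk i).val : ℕ) : ℝ) * x i j = 0 := by
      intro i hi
      have hin := (Finset.mem_erase.mp hi).1
      have hxi := hJspec i hin
      have hk : kk i = -1 - J i := by simp [hkk, hin]
      have : ∑ j, (((j + kk i).val : ℕ) : ℝ) * x i j
          = (((J i + kk i).val : ℕ) : ℝ) := by
        rw [hxi]
        rw [Finset.sum_eq_single (J i)]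
        · simp
        · intro b _ hb; simp [hb]
        · simp
      rw [this, hk]
      have : J i + (-1 - J i) = -1 := by ring
      rw [this]
      have hp2 : 2 ≤ p := hp.two_le
      obtain ⟨q, rfl⟩ : ∃ q, p = q + 1 := ⟨p - 1, by omega⟩
      rw [ZMod.val_neg_one]
      push_cast; ring
    rw [Finset.sum_eq_zero hzero, add_zero]
    have hT : 0 < ∑ j, (((j + kk n).val : ℕ) : ℝ) * x n j := by
      rcases lt_or_eq_of_le (Finset.sum_nonneg fun j _ =>
        mul_nonneg (Nat.cast_nonneg _) ((hsimplex n).1 j)) with h | h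
      · exact h
      exfalso
      have hterm : ∀ j : ZMod p, (((j + kk n).val : ℕ) : ℝ) * x n j = 0 := by
        intro j
        have := (Finset.sum_eq_zero_iff_of_nonneg fun j _ =>
          mul_nonneg (Nat.cast_nonneg _) ((hsimplex n).1 j)).mp h.symm
        exact this j (Finset.mem_univ j)
      have hxz : ∀ j : ZMod p, j ≠ -kk n → x n j = 0 := by
        intro j hj
        have hne : j + kk n ≠ 0 := by
          intro h0; apply hj; linear_combination h0
        have hv : ((j + kk n).val : ℕ) ≠ 0 := by
          simpa [ZMod.val_eq_zero] using hne
        have := hterm j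
        rcases mul_eq_zero.mp this with h' | h'
        · exact absurd h' (by exact_mod_cast hv)
        · exact h'
      have hone : x n (-kk n) = 1 := by
        have := (hsimplex n).2
        rw [Finset.sum_eq_single (-kk n)] at this
        · exact this
        · intro b _ hb; exact hxz b hb
        · simp
      apply hfrac
      refine ⟨-kk n, funext fun δ => ?_⟩
      by_cases hδ : δ = -kk n
      · simp [hδ, hone]
      · simp [hδ, hxz δ hδ]
    linarith
end
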